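/- In the Artin braid group B_n, the element α₁ = σ_1 σ_2 ⋯ σ_{n−2} σ_{n−1}² satisfies α₁^i σ_1 α₁^{−i} = σ_{1+i} for 1 ≤ i ≤ n−3. -/

import Mathlib

/-- The braid relations on the generators `σ_1, …, σ_{n−1}` (indexed by `Fin (n−1)`):
`σ_i σ_j = σ_j σ_i` for `|i−j| > 1` and `σ_i σ_{i+1} σ_i = σ_{i+1} σ_i σ_{i+1}`. -/
def braidRels (n : ℕ) : Set (FreeGroup (Fin (n - 1))) :=
  {x | (∃ i j : Fin (n - 1), (i : ℕ) + 1 < (j : ℕ) ∧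
          x = FreeGroup.of i * FreeGroup.of j * (FreeGroup.of i)⁻¹ * (FreeGroup.of j)⁻¹) ∨
       (∃ i j : Fin (n - 1), (i : ℕ) + 1 = (j : ℕ) ∧
          x = FreeGroup.of i * FreeGroup.of j * FreeGroup.of i *
              (FreeGroup.of j)⁻¹ * (FreeGroup.of i)⁻¹ * (FreeGroup.of j)⁻¹)}

/-- The Artin braid group `B_n`, presented with generators `σ_1, …, σ_{n−1}` and the
braid and commutation relations. -/
abbrev BraidGroup (n : ℕ) := PresentedGroup (braidRels n)

/-- The standard generator `σ_{i+1}` of `B_n`, for `i : Fin (n−1)` (so `braidSigma 0`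
is `σ_1`). -/
def braidSigma {n : ℕ} (i : Fin (n - 1)) : BraidGroup n := PresentedGroup.of i

/-- The element `α₀ = σ_1 σ_2 ⋯ σ_{n−1}` of `B_n`. -/
def braidAlpha0 (n : ℕ) : BraidGroup n := (List.ofFn (fun i => braidSigma (n := n) i)).prod

/-- The element `α₁ = σ_1 σ_2 ⋯ σ_{n−2} σ_{n−1}²` of `B_n` (for `n ≥ 2`). -/
def braidAlpha1 (n : ℕ) (hn : 2 ≤ n) : BraidGroup n :=
  braidAlpha0 n * braidSigma (⟨n - 2, by omega⟩ : Fin (n - 1))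

/-! Conjugation by `α₀ = σ_1 ⋯ σ_{n−1}` sends `σ_j` to `σ_{j+1}` for `j ≤ n − 2`: moving `σ_j`
leftwards through `α₀`, it commutes past `σ_{n−1}, …, σ_{j+2}`, turns `σ_j σ_{j+1} σ_j` into
`σ_{j+1} σ_j σ_{j+1}`, and the resulting `σ_{j+1}` commutes past `σ_{j−1}, …, σ_1`. Since
`σ_{n−1}` commutes with `σ_j` for `j ≤ n − 3`, conjugation by `α₁ = α₀ σ_{n−1}` still shifts
`σ_j` to `σ_{j+1}` in that range, and iterating it `i` times carries `σ_1` to `σ_{1+i}`. -/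

section BraidMonoid

variable {M : Type*} [Monoid M]

theorem semiconjBy_prod_range_of_braid (g : ℕ → M) {m j : ℕ}
    (hcomm : ∀ a b, a + 1 < b → b < m → Commute (g a) (g b))
    (hbraid : g j * g (j + 1) * g j = g (j + 1) * g j * g (j + 1)) (hj : j + 1 < m) :
    SemiconjBy ((List.range m).map g).prod (g j) (g (j + 1)) := by
  induction m, hj using Nat.le_induction with
  | base =>
    have hlow : Commute (g (j + 1)) ((List.range j).map g).prod :=
      Commute.list_prod_right _ _ fun x hx => by
        obtain ⟨a, ha, rfl⟩ := List.mem_map.1 hx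
        exact (hcomm a (j + 1) (by simpa using ha) (by omega)).symm
    simp only [SemiconjBy, List.prod_range_succ]
    calc ((List.range j).map g).prod * g j * g (j + 1) * g j
        = ((List.range j).map g).prod * (g j * g (j + 1) * g j) := by simp only [mul_assoc]
      _ = g (j + 1) * (((List.range j).map g).prod * g j * g (j + 1)) := by
        rw [hbraid, ← mul_assoc, ← mul_assoc, ← hlow.eq]; simp only [mul_assoc]
  | succ m hm ih =>
    rw [List.prod_range_succ]
    exact (ih fun a b hab hb => hcomm a b hab (by omega)).mul_left
      (hcomm j m (by omega) (by omega)).symm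

theorem semiconjBy_pow_of_forall_semiconjBy (a : M) (g : ℕ → M) {m : ℕ}
    (h : ∀ j < m, SemiconjBy a (g j) (g (j + 1))) {i : ℕ} (hi : i ≤ m) :
    SemiconjBy (a ^ i) (g 0) (g i) := by
  induction i with
  | zero => simp
  | succ i ih => simpa only [pow_succ'] using (h i (by omega)).mul_left (ih (by omega))

end BraidMonoid

def braidSigmaNat (n k : ℕ) : BraidGroup n := if h : k < n - 1 then braidSigma ⟨k, h⟩ else 1

theorem braidSigmaNat_of_lt {n k : ℕ} (h : k < n - 1) : braidSigmaNat n k = braidSigma ⟨k, h⟩ :=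
  dif_pos h

theorem braidSigma_commute {n : ℕ} {i j : Fin (n - 1)} (h : (i : ℕ) + 1 < j) :
    Commute (braidSigma i) (braidSigma j) := by
  have := PresentedGroup.one_of_mem (rels := braidRels n) (Or.inl ⟨i, j, h, rfl⟩)
  simp only [map_mul, map_inv, mul_inv_eq_iff_eq_mul, one_mul] at this
  exact this

theorem braidSigma_braid {n : ℕ} {i j : Fin (n - 1)} (h : (i : ℕ) + 1 = j) :
    braidSigma i * braidSigma j * braidSigma i = braidSigma j * braidSigma i * braidSigma j := by
  have := PresentedGroup.one_of_mem (rels := braidRels n) (Or.inr ⟨i, j, h, rfl⟩)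
  simp only [map_mul, map_inv, mul_inv_eq_iff_eq_mul, one_mul] at this
  exact this

theorem braidSigmaNat_commute {n a b : ℕ} (h : a + 1 < b) :
    Commute (braidSigmaNat n a) (braidSigmaNat n b) := by
  unfold braidSigmaNat
  split_ifs
  · exact braidSigma_commute h
  all_goals simp

theorem braidSigmaNat_braid {n a : ℕ} (h : a + 1 < n - 1) :
    braidSigmaNat n a * braidSigmaNat n (a + 1) * braidSigmaNat n a =
      braidSigmaNat n (a + 1) * braidSigmaNat n a * braidSigmaNat n (a + 1) := by
  rw [braidSigmaNat_of_lt (by omega), braidSigmaNat_of_lt h]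
  exact braidSigma_braid rfl

theorem braidAlpha0_eq_prod_range (n : ℕ) :
    braidAlpha0 n = ((List.range (n - 1)).map (braidSigmaNat n)).prod := by
  rw [braidAlpha0, List.ofFn_eq_map, ← List.map_coe_finRange_eq_range, List.map_map]
  congr 2
  funext k
  exact (braidSigmaNat_of_lt k.isLt).symm

theorem semiconjBy_braidAlpha1 {n j : ℕ} (hn : 2 ≤ n) (hj : j + 1 < n - 2) :
    SemiconjBy (braidAlpha1 n hn) (braidSigmaNat n j) (braidSigmaNat n (j + 1)) := by
  rw [braidAlpha1, braidAlpha0_eq_prod_range, ← braidSigmaNat_of_lt (by omega)]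
  exact (semiconjBy_prod_range_of_braid _ (fun a b hab _ => braidSigmaNat_commute hab)
    (braidSigmaNat_braid (by omega)) (by omega)).mul_left (braidSigmaNat_commute (by omega)).symm

/-- In `B_n`, `α₁^i σ_1 α₁^{−i} = σ_{1+i}` for `1 ≤ i ≤ n−3`. -/
theorem stmt15 (n i : ℕ) (hn : 2 ≤ n) (h2 : i ≤ n - 3) :
    braidAlpha1 n hn ^ i * braidSigma (⟨0, by omega⟩ : Fin (n - 1)) *
        (braidAlpha1 n hn ^ i)⁻¹ =
      braidSigma (⟨i, by omega⟩ : Fin (n - 1)) := by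
  have key := semiconjBy_pow_of_forall_semiconjBy (braidAlpha1 n hn) (braidSigmaNat n)
    (fun j hj => semiconjBy_braidAlpha1 hn (by omega)) h2
  rw [braidSigmaNat_of_lt (by omega), braidSigmaNat_of_lt (by omega)] at key
  rw [key.eq, mul_inv_cancel_right]
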